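/- arXiv:2409.07941 — 5 statements merged into one kernel-verified Lean document; each statement's English description precedes it below -/
import Mathlib

section
/- Let K be a real quadratic field, fix one of the two embeddings ι : K → ℝ, and let G(z₁,…,z_r) = G₀(z₁, τ(z₁), …, z_r, τ(z_r)) be a totally positive definite generalized quadratic form in r variables over K. Then there exists a real constant δ > 0 with the following property: whenever (z₁,…,z_r) ∈ O_K^r is such that some proper variable z_i takes a nonzero value, it holds that ι(G(z₁,…,z_r)) ≥ δ. -/
/-!
Restricted to the coordinates that appear in `G`, `G₀` becomes a quadratic form `Q` over `K`
with `φ₁ (Q x) > 0` for `x ≠ 0`. Its Gram matrix pushed to `ℝ` by `φ₁` is positive semidefinite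
because `ℚⁿ` is dense in `ℝⁿ`, and invertible because `Q` is anisotropic, so it is positive
definite; compactness of the unit sphere then gives `δ * ‖φ₁ ∘ x‖ ^ 2 ≤ φ₁ (Q x)`.
If a proper variable `zᵢ ≠ 0`, both `zᵢ` and `τ zᵢ` are coordinates, and
`|φ₁ zᵢ| * |φ₁ (τ zᵢ)| = |N(zᵢ)| ≥ 1`, so the sup norm is at least `1`.
-/

open NumberField Matrix

theorem QuadraticForm.apply_eq_dotProduct_toMatrix' {R n : Type*} [CommRing R] [Invertible (2 : R)]
    [Fintype n] [DecidableEq n] (Q : QuadraticForm R (n → R)) (x : n → R) :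
    Q x = x ⬝ᵥ Q.toMatrix' *ᵥ x := by
  rw [toMatrix', ← Matrix.toLinearMap₂'_apply', Matrix.toLinearMap₂'_toMatrix',
    QuadraticMap.associated_eq_self_apply]

theorem Matrix.coe_toQuadraticForm' {R n : Type*} [CommRing R] [Fintype n] [DecidableEq n]
    (M : Matrix n n R) : ⇑M.toQuadraticForm' = fun x => x ⬝ᵥ M *ᵥ x := by
  ext x
  simp [toQuadraticForm', toLinearMap₂'_apply']

theorem RingHom.map_dotProduct_mulVec {R S n : Type*} [CommSemiring R] [CommSemiring S] [Fintype n]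
    (f : R →+* S) (M : Matrix n n R) (v w : n → R) :
    f (v ⬝ᵥ M *ᵥ w) = (f ∘ v) ⬝ᵥ M.map f *ᵥ (f ∘ w) := by
  rw [RingHom.map_dotProduct]
  congr 1
  funext i
  exact RingHom.map_mulVec f M w i

theorem QuadraticMap.PosDef.exists_pos_mul_sq_norm_le {E : Type*} [NormedAddCommGroup E]
    [NormedSpace ℝ E] [FiniteDimensional ℝ E] {Q : QuadraticForm ℝ E} (hQ : Q.PosDef)
    (hc : Continuous Q) : ∃ δ > 0, ∀ x, δ * ‖x‖ ^ 2 ≤ Q x := by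
  rcases subsingleton_or_nontrivial E with hE | hE
  · exact ⟨1, one_pos, fun x => by simp [Subsingleton.elim x 0]⟩
  obtain ⟨u, hu, hmin⟩ := (isCompact_sphere (0 : E) 1).exists_isMinOn
    (NormedSpace.sphere_nonempty.mpr zero_le_one) hc.continuousOn
  refine ⟨Q u, hQ u (ne_zero_of_mem_unit_sphere ⟨u, hu⟩), fun x => ?_⟩
  rcases eq_or_ne x 0 with rfl | hx
  · simp
  have hx' : ‖x‖ ≠ 0 := norm_ne_zero_iff.mpr hx
  have hunit : ‖x‖⁻¹ • x ∈ Metric.sphere (0 : E) 1 := by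
    rw [mem_sphere_zero_iff_norm, norm_smul, norm_inv, norm_norm, inv_mul_cancel₀ hx']
  calc Q u * ‖x‖ ^ 2 ≤ Q (‖x‖⁻¹ • x) * ‖x‖ ^ 2 := by gcongr; exact hmin hunit
    _ = Q x := by
      rw [QuadraticMap.map_smul, smul_eq_mul]
      field_simp

theorem Matrix.posDef_map_of_pos {K n : Type*} [Field K] [Fintype n] [DecidableEq n]
    (φ : K →+* ℝ) {M : Matrix n n K} (hM : M.IsSymm)
    (hpos : ∀ x ≠ 0, 0 < φ (x ⬝ᵥ M *ᵥ x)) : (M.map φ).PosDef := by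
  have hnonneg : ∀ v : n → ℝ, 0 ≤ v ⬝ᵥ M.map φ *ᵥ v := by
    intro v
    refine (DenseRange.piMap fun _ => Rat.denseRange_cast).induction_on v
      (isClosed_le continuous_const (by fun_prop)) fun q => ?_
    have hq : Pi.map (fun _ => ((↑) : ℚ → ℝ)) q = φ ∘ fun i => (q i : K) := by
      funext i
      simp
    rw [hq, ← RingHom.map_dotProduct_mulVec]
    rcases eq_or_ne (fun i => (q i : K)) 0 with h0 | hx
    · simp [h0]
    · exact (hpos _ hx).le
  have hpsd : (M.map φ).PosSemidef :=
    .of_dotProduct_mulVec_nonneg (isHermitian_iff_isSymm.mpr (hM.map φ)) fun v => by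
      simpa using hnonneg v
  refine hpsd.posDef_iff_det_ne_zero.mpr ?_
  rw [← RingHom.mapMatrix_apply, ← RingHom.map_det, map_ne_zero]
  intro hdet
  obtain ⟨x, hx, hMx⟩ := Matrix.exists_mulVec_eq_zero_iff.mpr hdet
  simpa [hMx] using hpos x hx

theorem QuadraticForm.exists_pos_mul_sq_norm_comp_le {K n : Type*} [Field K] [Fintype n]
    [DecidableEq n] (φ : K →+* ℝ) (Q : QuadraticForm K (n → K))
    (hQ : ∀ x ≠ 0, 0 < φ (Q x)) : ∃ δ > 0, ∀ x : n → K, δ * ‖φ ∘ x‖ ^ 2 ≤ φ (Q x) := by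
  have : CharZero K := RingHom.charZero φ
  let : Invertible (2 : K) := invertibleOfNonzero two_ne_zero
  simp_rw [Q.apply_eq_dotProduct_toMatrix'] at hQ ⊢
  have hA := (Matrix.posDef_map_of_pos φ Q.isSymm_toMatrix' hQ).toQuadraticForm'
  obtain ⟨δ, hδ, hle⟩ := hA.exists_pos_mul_sq_norm_le <| by
    rw [Matrix.coe_toQuadraticForm']
    fun_prop
  refine ⟨δ, hδ, fun x => ?_⟩
  simpa [RingHom.map_dotProduct_mulVec, Matrix.coe_toQuadraticForm'] using hle (φ ∘ x)

theorem QuadraticForm.exists_pos_mul_sq_norm_restrict_le {K ι : Type*} [Field K] [DecidableEq ι]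
    (φ : K →+* ℝ) (Q : QuadraticForm K (ι → K)) (S : Set ι) [Fintype S]
    (hS : ∀ x y : ι → K, (∀ p ∈ S, x p = y p) → Q x = Q y)
    (hQ : ∀ x : ι → K, (∀ p ∉ S, x p = 0) → x ≠ 0 → 0 < φ (Q x)) :
    ∃ δ > 0, ∀ x : ι → K, δ * ‖fun s : S => φ (x s)‖ ^ 2 ≤ φ (Q x) := by
  set ext := Function.ExtendByZero.linearMap K ((↑) : S → ι)
  have hext : ∀ (y : S → K) (s : S), ext y s = y s := fun y s =>
    Subtype.val_injective.extend_apply y 0 s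
  have hext_supp : ∀ (y : S → K), ∀ p ∉ S, ext y p = 0 := fun y p hp =>
    Function.extend_apply' _ _ _ fun ⟨s, hs⟩ => hp (hs ▸ s.2)
  obtain ⟨δ, hδ, hle⟩ := exists_pos_mul_sq_norm_comp_le φ (Q.comp ext) fun y hy =>
    hQ _ (hext_supp y) fun h => hy (funext fun s => by simpa [hext] using congr_fun h s)
  refine ⟨δ, hδ, fun x => ?_⟩
  rw [hS x (ext fun s => x s) fun p hp => (hext (fun s => x s) ⟨p, hp⟩).symm]
  exact hle _

theorem Algebra.IsQuadraticExtension.algebraMap_norm_eq_mul {F K : Type*} [Field F] [Field K]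
    [Algebra F K] [IsQuadraticExtension F K] [Algebra.IsSeparable F K] {τ : K ≃ₐ[F] K}
    (hτ : τ ≠ 1) (x : K) : algebraMap F K (Algebra.norm F x) = x * τ x := by
  classical
  have hcard : Fintype.card (K ≃ₐ[F] K) = 2 := by
    rw [← Nat.card_eq_fintype_card, IsGalois.card_aut_eq_finrank, finrank_eq_two]
  have huniv : (Finset.univ : Finset (K ≃ₐ[F] K)) = {1, τ} :=
    (Finset.eq_univ_of_card _ (by rw [Finset.card_pair hτ.symm, hcard])).symm
  rw [Algebra.norm_eq_prod_automorphisms, huniv, Finset.prod_pair hτ.symm]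
  rfl

theorem NumberField.RingOfIntegers.one_le_abs_mul_abs_conj {K : Type*} [Field K] [NumberField K]
    [Algebra.IsQuadraticExtension ℚ K] {τ : K ≃ₐ[ℚ] K} (hτ : τ ≠ 1) (φ : K →+* ℝ) {w : 𝓞 K}
    (hw : w ≠ 0) : 1 ≤ |φ w| * |φ (τ w)| := by
  have hn : Algebra.norm ℤ w ≠ 0 := by simpa using hw
  rw [← abs_mul, ← map_mul, ← Algebra.IsQuadraticExtension.algebraMap_norm_eq_mul hτ,
    ← Algebra.coe_norm_int, map_intCast, map_intCast]
  exact_mod_cast Int.one_le_abs hn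

theorem genform_lower_bound_general
    (K : Type*) [Field K] [NumberField K]
    (hdeg : Module.finrank ℚ K = 2)
    (φ₁ φ₂ : K →+* ℝ)
    (τ : K ≃ₐ[ℚ] K) (hτ : τ ≠ AlgEquiv.refl)
    (r : ℕ) (G₀ : QuadraticForm K ((Fin r × Bool) → K))
    (S : Set (Fin r × Bool))
    (hS : ∀ x y : (Fin r × Bool) → K, (∀ p ∈ S, x p = y p) → G₀ x = G₀ y)
    (hdef : ∀ x : (Fin r × Bool) → K, (∀ p ∉ S, x p = 0) → x ≠ 0 →
      0 < φ₁ (G₀ x) ∧ 0 < φ₂ (G₀ x)) :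
    ∃ δ : ℝ, 0 < δ ∧ ∀ z : Fin r → 𝓞 K,
      (∃ i : Fin r, (i, false) ∈ S ∧ (i, true) ∈ S ∧ z i ≠ 0) →
      δ ≤ φ₁ (G₀ (fun p => if p.2 then τ (z p.1 : K) else (z p.1 : K))) := by
  classical
  have : Algebra.IsQuadraticExtension ℚ K := ⟨hdeg⟩
  obtain ⟨δ, hδ, hle⟩ := G₀.exists_pos_mul_sq_norm_restrict_le φ₁ S hS fun x hx hx0 =>
    (hdef x hx hx0).1
  refine ⟨δ, hδ, ?_⟩
  rintro z ⟨i, hif, hit, hzi⟩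
  set x : (Fin r × Bool) → K := fun p => if p.2 then τ (z p.1 : K) else (z p.1 : K)
  set N := ‖fun s : S => φ₁ (x s)‖
  have hle_N : ∀ s : S, |φ₁ (x s)| ≤ N := norm_le_pi_norm (fun s : S => φ₁ (x s))
  have hN : 1 ≤ N ^ 2 :=
    calc (1 : ℝ) ≤ |φ₁ (z i)| * |φ₁ (τ (z i))| :=
          NumberField.RingOfIntegers.one_le_abs_mul_abs_conj hτ φ₁ hzi
      _ ≤ N ^ 2 := by
        rw [sq]
        exact mul_le_mul (hle_N ⟨_, hif⟩) (hle_N ⟨_, hit⟩) (abs_nonneg _) (norm_nonneg _)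
  calc δ ≤ δ * N ^ 2 := le_mul_of_one_le_right hδ.le hN
    _ ≤ φ₁ (G₀ x) := hle x

/-- **Lemma 3.3.** Let `K` be a real quadratic field (a totally real number field of degree 2,
presented via its two distinct real embeddings `φ₁ φ₂ : K →+* ℝ`, with `ι := φ₁` a fixed one of
them) with nontrivial automorphism `τ`.  A generalized quadratic form in `r` variables is given
by a quadratic form `G₀` in `2r` variables (indexed by `Fin r × Bool`, where `(i, false)`
receives `zᵢ` and `(i, true)` receives `τ(zᵢ)`), via
`G(z₁,…,z_r) = G₀(z₁, τ(z₁), …, z_r, τ(z_r))`.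
The set `S` of coordinates appearing in `G` is encoded by requiring that `G₀` depend only on
the coordinates in `S` (`hS`); a variable `zᵢ` is proper if both `(i, false)` and `(i, true)`
lie in `S`.  Total positive definiteness of `G` means that its associated quadratic form
(the restriction of `G₀` to the coordinates in `S`) is totally positive definite (`hdef`).
Then there is a real `δ > 0` such that whenever `(z₁,…,z_r) ∈ (𝓞 K)^r` has some proper
variable `zᵢ` taking a nonzero value, we get `ι(G(z₁,…,z_r)) ≥ δ`. -/
theorem genform_lower_bound
    (K : Type*) [Field K] [NumberField K]
    (hdeg : Module.finrank ℚ K = 2)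
    (φ₁ φ₂ : K →+* ℝ) (hφ : φ₁ ≠ φ₂)
    (τ : K ≃ₐ[ℚ] K) (hτ : τ ≠ AlgEquiv.refl)
    (r : ℕ) (G₀ : QuadraticForm K ((Fin r × Bool) → K))
    (S : Set (Fin r × Bool))
    (hS : ∀ x y : (Fin r × Bool) → K, (∀ p ∈ S, x p = y p) → G₀ x = G₀ y)
    (hdef : ∀ x : (Fin r × Bool) → K, (∀ p ∉ S, x p = 0) → x ≠ 0 →
      0 < φ₁ (G₀ x) ∧ 0 < φ₂ (G₀ x)) :
    ∃ δ : ℝ, 0 < δ ∧ ∀ z : Fin r → 𝓞 K,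
      (∃ i : Fin r, (i, false) ∈ S ∧ (i, true) ∈ S ∧ z i ≠ 0) →
      δ ≤ φ₁ (G₀ (fun p => if p.2 then τ (z p.1 : K) else (z p.1 : K))) :=
  genform_lower_bound_general K hdeg φ₁ φ₂ τ hτ r G₀ S hS hdef
end

section
/- Let K be a real quadratic field with nontrivial automorphism τ, and let G₀ be a quadratic form in 2r variables over K. Then G₀ is totally positive semidefinite (i.e., G₀(x) ⪰ 0 for all x ∈ K^{2r}) if and only if the generalized form G(z₁,…,z_r) = G₀(z₁, τ(z₁), …, z_r, τ(z_r)) attains only totally nonnegative values, i.e., G(z₁,…,z_r) ⪰ 0 for all (z₁,…,z_r) ∈ K^r. -/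
/-!
A degree-2 field has only two real embeddings, so `φ₁ ∘ τ = φ₂`. Hence `φ₁ (G₀ (z, τ z))` is the
real quadratic form with matrix `φ₁ (toMatrix' G₀)` evaluated at `(φ₁ z, φ₂ z)`. Since `φ₁ ≠ φ₂`,
these vectors are dense in `ℝ^{2r}` (already `ℚ + ℚθ` is dense in `ℝ²` when `φ₁ θ ≠ φ₂ θ`), so by
continuity that real form is nonnegative everywhere, in particular at `φ₁ x` for every
`x ∈ K^{2r}`. The same argument works for `φ₂`.
-/

open Matrix

theorem QuadraticForm.map_apply_eq_dotProduct_mulVec {R S n : Type*} [CommRing R]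
    [Invertible (2 : R)] [CommRing S] [Fintype n] [DecidableEq n] (f : R →+* S)
    (Q : QuadraticForm R (n → R)) (x : n → R) :
    f (Q x) = (f ∘ x) ⬝ᵥ Q.toMatrix'.map f *ᵥ (f ∘ x) := by
  have hQ : Q x = x ⬝ᵥ Q.toMatrix' *ᵥ x := by
    rw [← QuadraticMap.associated_eq_self_apply R Q x, QuadraticForm.toMatrix',
      ← Matrix.toLinearMap₂'_apply', Matrix.toLinearMap₂'_toMatrix']
  rw [hQ, RingHom.map_dotProduct]
  congr 1
  funext i
  exact RingHom.map_mulVec f _ x i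

theorem NumberField.ringHom_real_eq_of_ne_of_ne {K : Type*} [Field K] [NumberField K]
    (hdeg : Module.finrank ℚ K = 2) {φ ψ χ : K →+* ℝ} (hφψ : φ ≠ ψ) (hχφ : χ ≠ φ) :
    χ = ψ := by
  by_contra hχψ
  have hinj : Function.Injective fun f : K →+* ℝ => Complex.ofRealHom.comp f :=
    fun f g h => RingHom.ext fun a => Complex.ofReal_injective (RingHom.congr_fun h a)
  have hcard : 2 < Fintype.card (K →+* ℂ) :=
    Fintype.two_lt_card_iff.mpr ⟨_, _, _, hinj.ne hφψ, hinj.ne hχφ.symm, hinj.ne (Ne.symm hχψ)⟩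
  rw [NumberField.Embeddings.card, hdeg] at hcard
  exact lt_irrefl 2 hcard

theorem NumberField.apply_algEquiv_eq_of_finrank_eq_two {K : Type*} [Field K] [NumberField K]
    (hdeg : Module.finrank ℚ K = 2) {φ ψ : K →+* ℝ} (hφψ : φ ≠ ψ) {τ : K ≃ₐ[ℚ] K}
    (hτ : τ ≠ AlgEquiv.refl) (a : K) : φ (τ a) = ψ a := by
  have hne : φ.comp (τ : K →+* K) ≠ φ := fun h =>
    hτ (AlgEquiv.ext fun a => φ.injective (RingHom.congr_fun h a))
  exact RingHom.congr_fun (ringHom_real_eq_of_ne_of_ne hdeg hφψ hne) a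

theorem denseRange_ringHom_prod {K : Type*} [Field K] {φ ψ : K →+* ℝ} (hφψ : φ ≠ ψ) :
    DenseRange fun a => (φ a, ψ a) := by
  have := φ.charZero
  obtain ⟨θ, hθ⟩ := DFunLike.ne_iff.mp hφψ
  set L : ℝ × ℝ → ℝ × ℝ := fun p => (p.1 + p.2 * φ θ, p.1 + p.2 * ψ θ)
  have hL : Function.Surjective L := by
    rintro ⟨s, t⟩
    have hd : φ θ - ψ θ ≠ 0 := sub_ne_zero.mpr hθ
    refine ⟨(s - (s - t) / (φ θ - ψ θ) * φ θ, (s - t) / (φ θ - ψ θ)), ?_⟩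
    simp only [L, Prod.mk.injEq]
    constructor <;> field_simp <;> ring
  have hdense : DenseRange (L ∘ Prod.map ((↑) : ℚ → ℝ) ((↑) : ℚ → ℝ)) :=
    hL.denseRange.comp (Rat.denseRange_cast.prodMap Rat.denseRange_cast) (by fun_prop)
  refine Dense.mono ?_ hdense
  rintro _ ⟨⟨p, q⟩, rfl⟩
  exact ⟨p + q * θ, by simp [L]⟩

theorem denseRange_ringHom_pi_bool {K ι : Type*} [Field K] {φ ψ : K →+* ℝ} (hφψ : φ ≠ ψ) :
    DenseRange fun (z : ι → K) (p : ι × Bool) => if p.2 then ψ (z p.1) else φ (z p.1) := by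
  set g : (ι → ℝ × ℝ) → ι × Bool → ℝ := fun w p => if p.2 then (w p.1).2 else (w p.1).1
  have hg : Function.Surjective g := fun v =>
    ⟨fun i => (v (i, false), v (i, true)), funext fun ⟨i, b⟩ => by cases b <;> rfl⟩
  have hgc : Continuous g := continuous_pi fun ⟨i, b⟩ => by
    cases b
    · exact (continuous_apply i).fst
    · exact (continuous_apply i).snd
  exact hg.denseRange.comp (DenseRange.piMap fun _ => denseRange_ringHom_prod hφψ) hgc

theorem QuadraticForm.nonneg_of_nonneg_twist {K ι : Type*} [Field K] [Fintype ι]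
    {φ ψ : K →+* ℝ} (hφψ : φ ≠ ψ) {τ : K → K} (hτ : ∀ a, φ (τ a) = ψ a)
    (G₀ : QuadraticForm K (ι × Bool → K))
    (h : ∀ z : ι → K, 0 ≤ φ (G₀ fun p => if p.2 then τ (z p.1) else z p.1))
    (x : ι × Bool → K) : 0 ≤ φ (G₀ x) := by
  classical
  have := φ.charZero
  let : Invertible (2 : K) := invertibleOfNonzero two_ne_zero
  set M := G₀.toMatrix'.map φ
  have hclosed : IsClosed {w : ι × Bool → ℝ | 0 ≤ w ⬝ᵥ M *ᵥ w} :=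
    isClosed_le continuous_const (continuous_id.dotProduct (continuous_const.matrix_mulVec
      continuous_id))
  have hall : ∀ w : ι × Bool → ℝ, 0 ≤ w ⬝ᵥ M *ᵥ w := fun w =>
    (denseRange_ringHom_pi_bool hφψ).induction_on w hclosed fun z => by
      convert h z using 1
      rw [map_apply_eq_dotProduct_mulVec]
      congr <;> funext ⟨i, b⟩ <;> cases b <;> simp [hτ]
  simpa only [map_apply_eq_dotProduct_mulVec] using hall (φ ∘ x)

/-- **Section 4, semidefiniteness equivalence.** Let `K` be a real quadratic field (a totally
real number field of degree 2, presented via its two distinct real embeddings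
`φ₁ φ₂ : K →+* ℝ`) with nontrivial automorphism `τ`, and let `G₀` be a quadratic form in `2r`
variables over `K` (indexed by `Fin r × Bool`).  Then `G₀` is totally positive semidefinite
(`G₀ x ⪰ 0` for all `x ∈ K^{2r}`) if and only if the generalized form
`G(z₁,…,z_r) = G₀(z₁, τ(z₁), …, z_r, τ(z_r))` attains only totally nonnegative values on
`K^r`. -/
theorem totally_psd_iff_genform_nonneg
    (K : Type*) [Field K] [NumberField K]
    (hdeg : Module.finrank ℚ K = 2)
    (φ₁ φ₂ : K →+* ℝ) (hφ : φ₁ ≠ φ₂)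
    (τ : K ≃ₐ[ℚ] K) (hτ : τ ≠ AlgEquiv.refl)
    (r : ℕ) (G₀ : QuadraticForm K ((Fin r × Bool) → K)) :
    (∀ x : (Fin r × Bool) → K, 0 ≤ φ₁ (G₀ x) ∧ 0 ≤ φ₂ (G₀ x)) ↔
    (∀ z : Fin r → K,
      0 ≤ φ₁ (G₀ (fun p => if p.2 then τ (z p.1) else z p.1)) ∧
      0 ≤ φ₂ (G₀ (fun p => if p.2 then τ (z p.1) else z p.1))) := by
  refine ⟨fun h z => h _, fun h x => ⟨?_, ?_⟩⟩
  · exact G₀.nonneg_of_nonneg_twist hφ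
      (NumberField.apply_algEquiv_eq_of_finrank_eq_two hdeg hφ hτ) (fun z => (h z).1) x
  · exact G₀.nonneg_of_nonneg_twist hφ.symm
      (NumberField.apply_algEquiv_eq_of_finrank_eq_two hdeg hφ.symm hτ) (fun z => (h z).2) x
end

section
/- Let ε = 3 + 2√2 ∈ ℤ[√2]. For every natural number n, writing ε^{2n} = a + b√2 with a, b ∈ ℤ, the integer b is divisible by 3; equivalently, for every n there exists z ∈ ℤ[√2] with 2z − τ(z) = ε^{2n}. -/
/-!
Im-parts divisible by `k` are closed under multiplication in `ℤ√d`, and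
`ε² = 17 + 12√2` has im-part `12`, so every `ε^(2n) = (ε²)^n` has im-part divisible by `3`.
Since `2z − τ(z) = z.re + 3 z.im √2`, the equation `2z − τ(z) = w` is solvable exactly when
`3 ∣ w.im`.
-/

namespace Zsqrtd

variable {d : ℤ}

theorem dvd_im_mul {k : ℤ} {x y : ℤ√d} (hx : k ∣ x.im) (hy : k ∣ y.im) : k ∣ (x * y).im := by
  rw [im_mul]
  exact dvd_add (dvd_mul_of_dvd_right hy _) (dvd_mul_of_dvd_left hx _)

theorem dvd_im_pow {k : ℤ} {x : ℤ√d} (hx : k ∣ x.im) (n : ℕ) : k ∣ (x ^ n).im := by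
  induction n with
  | zero => simp
  | succ n ih => rw [pow_succ]; exact dvd_im_mul ih hx

theorem two_mul_sub_star (z : ℤ√d) : 2 * z - star z = ⟨z.re, 3 * z.im⟩ := by
  ext <;> simp only [re_sub, im_sub, re_mul, im_mul, re_ofNat, im_ofNat, re_star, im_star,
    Nat.cast_ofNat] <;> ring

theorem exists_two_mul_sub_star_eq_iff (w : ℤ√d) :
    (∃ z : ℤ√d, 2 * z - star z = w) ↔ 3 ∣ w.im := by
  simp only [two_mul_sub_star]
  constructor
  · rintro ⟨z, rfl⟩
    exact dvd_mul_right 3 z.im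
  · rintro ⟨c, hc⟩
    exact ⟨⟨w.re, c⟩, by ext <;> simp [hc]⟩

end Zsqrtd

/-- **Section 4.** Let `ε = 3 + 2√2 ∈ ℤ[√2]`.  For every natural `n`, writing
`ε^(2n) = a + b√2` with `a, b ∈ ℤ`, the integer `b` is divisible by `3`; equivalently, for
every `n` there is `z ∈ ℤ[√2]` with `2z − τ(z) = ε^(2n)` (where `τ = star` is conjugation). -/
theorem eps_even_power_im_div_three (n : ℕ) :
    (3 : ℤ) ∣ (((⟨3, 2⟩ : ℤ√2)) ^ (2 * n)).im ∧
    ∃ z : ℤ√2, 2 * z - star z = (⟨3, 2⟩ : ℤ√2) ^ (2 * n) := by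
  have eps_sq : (⟨3, 2⟩ : ℤ√2) ^ 2 = ⟨17, 12⟩ := by ext <;> simp [sq]
  have h : (3 : ℤ) ∣ ((⟨3, 2⟩ : ℤ√2) ^ (2 * n)).im := by
    rw [pow_mul, eps_sq]
    exact Zsqrtd.dvd_im_pow ⟨4, rfl⟩ n
  exact ⟨h, (Zsqrtd.exists_two_mul_sub_star_eq_iff _).mpr h⟩
end

section
/- In ℤ[√2], set ε = 3 + 2√2, β = 2 + √2, g(z) = (2z − τ(z))², and let H(z₁,…,z₈) = g(z₁) + ε·g(z₂) + ε²·g(z₃) + ε³·g(z₄) + β·g(z₅) + εβ·g(z₆) + ε²β·g(z₇) + ε³β·g(z₈). Then H represents every indecomposable element of ℤ[√2]⁺: for every totally positive α ∈ ℤ[√2] that cannot be written as a sum of two totally positive elements of ℤ[√2], there exist z₁,…,z₈ ∈ ℤ[√2] with H(z₁,…,z₈) = α. -/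
/-- `α = a + b√2 ∈ ℤ[√2]` is totally positive: `a + b√2 > 0` and `a − b√2 > 0` in `ℝ`. -/
def Zsqrt2.TotPos (α : ℤ√2) : Prop :=
  0 < (α.re : ℝ) + (α.im : ℝ) * Real.sqrt 2 ∧
  0 < (α.re : ℝ) - (α.im : ℝ) * Real.sqrt 2

/-- The generalized form `H` of the counterexample in Section 4, with `ε = 3 + 2√2`,
`β = 2 + √2` and `g(z) = (2z − τ(z))²` (here `τ = star` is conjugation):
`H(z₁,…,z₈) = g(z₁) + ε g(z₂) + ε² g(z₃) + ε³ g(z₄) + β g(z₅) + εβ g(z₆) + ε²β g(z₇)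
  + ε³β g(z₈)`. -/
def Zsqrt2.H (z : Fin 8 → ℤ√2) : ℤ√2 :=
  (2 * z 0 - star (z 0)) ^ 2
    + (⟨3, 2⟩ : ℤ√2) * (2 * z 1 - star (z 1)) ^ 2
    + (⟨3, 2⟩ : ℤ√2) ^ 2 * (2 * z 2 - star (z 2)) ^ 2
    + (⟨3, 2⟩ : ℤ√2) ^ 3 * (2 * z 3 - star (z 3)) ^ 2
    + (⟨2, 1⟩ : ℤ√2) * (2 * z 4 - star (z 4)) ^ 2
    + (⟨3, 2⟩ : ℤ√2) * (⟨2, 1⟩ : ℤ√2) * (2 * z 5 - star (z 5)) ^ 2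
    + (⟨3, 2⟩ : ℤ√2) ^ 2 * (⟨2, 1⟩ : ℤ√2) * (2 * z 6 - star (z 6)) ^ 2
    + (⟨3, 2⟩ : ℤ√2) ^ 3 * (⟨2, 1⟩ : ℤ√2) * (2 * z 7 - star (z 7)) ^ 2

/-! The indecomposables are the elements `ε^m β^s` (`s ∈ {0, 1}`): multiplication by the totally
positive unit `ε^{±1}` preserves indecomposability, and outside the cone `2|b| ≤ a` one of
them lowers the rational part `a` of `α = a + b√2`, while inside the cone every element other
than `1`, `β`, `τβ = ε⁻¹β` is `1 + (α - 1)` with `α - 1` totally positive.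
Writing `m = r + 4q` with `0 ≤ r < 4`, we get `ε^m β^s = ε^r β^s (ε^{2q})²`, a single term of `H`:
`2z - τz` ranges over the order `ℤ[3√2]`, which contains `ε^{±2} = 17 ± 12√2` and hence
every `ε^{2q}`. -/

lemma zpow_eq_pow_emod_four_mul_sq {G : Type*} [Group G] (u : G) (m : ℤ) :
    u ^ m = u ^ (m % 4).toNat * ((u ^ 2) ^ (m / 4)) ^ 2 := by
  rw [← zpow_natCast, ← zpow_natCast u 2, ← zpow_mul, ← zpow_natCast, ← zpow_mul, ← zpow_add]
  congr 1
  push_cast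
  omega

namespace Zsqrt2

open Zsqrtd

def IsIndecomposable (α : ℤ√2) : Prop :=
  TotPos α ∧ ¬∃ β γ : ℤ√2, TotPos β ∧ TotPos γ ∧ β + γ = α

def ε : (ℤ√2)ˣ := ⟨⟨3, 2⟩, ⟨3, -2⟩, by decide, by decide⟩

def β : ℤ√2 := ⟨2, 1⟩

lemma totPos_iff_toReal (α : ℤ√2) :
    TotPos α ↔ 0 < toReal zero_le_two α ∧ 0 < toReal zero_le_two (star α) := by
  simp [TotPos, sub_eq_add_neg]

lemma totPos_iff (α : ℤ√2) : TotPos α ↔ 0 < α.re ∧ 2 * α.im ^ 2 < α.re ^ 2 := by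
  have hs : Real.sqrt 2 ^ 2 = 2 := Real.sq_sqrt zero_le_two
  have hs0 : 0 < Real.sqrt 2 := by positivity
  constructor
  · rintro ⟨h₁, h₂⟩
    have hre : (0 : ℝ) < α.re := by linarith
    have hnorm : 2 * (α.im : ℝ) ^ 2 < (α.re : ℝ) ^ 2 := by nlinarith [mul_pos h₁ h₂]
    exact ⟨mod_cast hre, mod_cast hnorm⟩
  · rintro ⟨h₁, h₂⟩
    have hre : (0 : ℝ) < α.re := mod_cast h₁
    have hnorm : 2 * (α.im : ℝ) ^ 2 < (α.re : ℝ) ^ 2 := mod_cast h₂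
    constructor <;>
      nlinarith [sq_nonneg ((α.re : ℝ) + α.im * Real.sqrt 2),
        sq_nonneg ((α.re : ℝ) - α.im * Real.sqrt 2), mul_pos hre hs0]

lemma totPos_one : TotPos 1 := by
  rw [totPos_iff]; decide

lemma totPos_ε : TotPos ε := by
  rw [totPos_iff]; decide

lemma TotPos.mul {α γ : ℤ√2} (hα : TotPos α) (hγ : TotPos γ) : TotPos (α * γ) := by
  rw [totPos_iff_toReal] at *
  simp only [star_mul', map_mul]
  exact ⟨mul_pos hα.1 hγ.1, mul_pos hα.2 hγ.2⟩

lemma TotPos.unit_inv {u : (ℤ√2)ˣ} (hu : TotPos u) : TotPos ↑u⁻¹ := by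
  rw [totPos_iff_toReal] at *
  have h₁ := congrArg (toReal zero_le_two) u.mul_inv
  have h₂ := congrArg (fun x => toReal zero_le_two (star x)) u.mul_inv
  simp only [star_mul', map_mul, star_one, map_one] at h₁ h₂
  exact ⟨pos_of_mul_pos_right (h₁ ▸ one_pos) hu.1.le,
    pos_of_mul_pos_right (h₂ ▸ one_pos) hu.2.le⟩

lemma totPos_ε_zpow (k : ℤ) : TotPos ↑(ε ^ k) := by
  induction k using Int.induction_on with
  | zero => simpa using totPos_one
  | succ k ih => rw [zpow_add_one, Units.val_mul]; exact ih.mul totPos_ε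
  | pred k ih => rw [zpow_sub_one, Units.val_mul]; exact ih.mul totPos_ε.unit_inv

lemma IsIndecomposable.unit_mul {α : ℤ√2} {u : (ℤ√2)ˣ} (hu : TotPos u)
    (h : IsIndecomposable α) : IsIndecomposable (u * α) := by
  refine ⟨hu.mul h.1, fun ⟨γ, δ, hγ, hδ, hsum⟩ => h.2 ⟨↑u⁻¹ * γ, ↑u⁻¹ * δ,
    hu.unit_inv.mul hγ, hu.unit_inv.mul hδ, ?_⟩⟩
  rw [← mul_add, hsum, Units.inv_mul_cancel_left]

lemma totPos_sub_one {α : ℤ√2} (hα : TotPos α) (hcone : 2 * |α.im| ≤ α.re)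
    (h₁ : α ≠ 1) (hβ : α ≠ β) (hβ' : α ≠ star β) : TotPos (α - 1) := by
  obtain ⟨a, b⟩ := α
  rw [totPos_iff] at hα ⊢
  simp only [ne_eq, Zsqrtd.ext_iff, β, star_mk, re_one, im_one, re_sub, im_sub, sub_zero]
    at h₁ hβ hβ' hcone hα ⊢
  rw [← sq_abs b] at hα ⊢
  have hb0 : 0 ≤ |b| := abs_nonneg b
  rcases (by omega : |b| = 0 ∨ |b| = 1 ∨ 2 ≤ |b|) with hb | hb | hb
  · have : a ≠ 1 := fun ha => h₁ ⟨ha, abs_eq_zero.1 hb⟩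
    have : 2 ≤ a := by omega
    rw [hb]; constructor <;> nlinarith
  · have : a ≠ 2 := fun ha => (abs_eq zero_le_one).1 hb |>.elim (hβ ⟨ha, ·⟩) (hβ' ⟨ha, ·⟩)
    have : 3 ≤ a := by omega
    rw [hb]; constructor <;> nlinarith
  · constructor <;> nlinarith

lemma exists_re_zpow_mul_lt {α : ℤ√2} (hα : TotPos α) (hout : α.re < 2 * |α.im|) :
    ∃ k : ℤ, (↑(ε ^ k) * α).re < α.re := by
  have hre : 0 < α.re := ((totPos_iff α).1 hα).1
  have him : α.im ≠ 0 := by rintro h; simp only [h, abs_zero, mul_zero] at hout; omega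
  rcases lt_or_gt_of_ne him with him | him
  · refine ⟨1, ?_⟩
    rw [zpow_one, re_mul]
    change 3 * α.re + 2 * 2 * α.im < α.re
    rw [abs_of_neg him] at hout
    linarith
  · refine ⟨-1, ?_⟩
    rw [zpow_neg_one, re_mul]
    change 3 * α.re + 2 * -2 * α.im < α.re
    rw [abs_of_pos him] at hout
    linarith

lemma eq_zpow_sub_mul {α x : ℤ√2} {k m : ℤ} (h : ↑(ε ^ k) * α = ↑(ε ^ m) * x) :
    α = ↑(ε ^ (m - k)) * x := by
  rw [zpow_sub, Units.val_mul, mul_right_comm, ← h, mul_comm, Units.inv_mul_cancel_left]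

theorem IsIndecomposable.exists_eq_zpow_mul_pow {α : ℤ√2} (h : IsIndecomposable α) :
    ∃ m : ℤ, ∃ s < 2, α = ↑(ε ^ m) * β ^ s := by
  induction hn : α.re.toNat using Nat.strong_induction_on generalizing α with
  | _ n ih =>
  have hre : 0 < α.re := ((totPos_iff α).1 h.1).1
  rcases le_or_gt (2 * |α.im|) α.re with hcone | hout
  · by_cases h₁ : α = 1
    · exact ⟨0, 0, by norm_num, by simp [h₁]⟩
    by_cases hβ : α = β
    · exact ⟨0, 1, by norm_num, by simp [hβ]⟩
    by_cases hβ' : α = star β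
    · refine ⟨-1, 1, by norm_num, ?_⟩
      rw [hβ', zpow_neg_one]
      decide
    exact (h.2 ⟨1, α - 1, totPos_one, totPos_sub_one h.1 hcone h₁ hβ hβ',
      add_sub_cancel _ _⟩).elim
  · obtain ⟨k, hk⟩ := exists_re_zpow_mul_lt h.1 hout
    have h' := h.unit_mul (totPos_ε_zpow k)
    obtain ⟨m, s, hs, hm⟩ := ih _ (by omega) h' rfl
    exact ⟨m - k, s, hs, eq_zpow_sub_mul hm⟩

lemma two_mul_sub_star_mk {d : ℤ} (x y : ℤ) :
    2 * (⟨x, y⟩ : ℤ√d) - star ⟨x, y⟩ = ⟨x, 3 * y⟩ := by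
  ext <;> simp [star_mk] <;> ring

lemma three_dvd_im_zpow_ε_sq (q : ℤ) : 3 ∣ (↑((ε ^ 2) ^ q) : ℤ√2).im := by
  have hε₂ : (↑(ε ^ 2) : ℤ√2) = ⟨17, 12⟩ := rfl
  have hε₂' : (↑(ε ^ 2)⁻¹ : ℤ√2) = ⟨17, -12⟩ := rfl
  induction q using Int.induction_on with
  | zero => simp
  | succ k ih =>
    rw [zpow_add_one, Units.val_mul, hε₂, im_mul]
    exact dvd_add (dvd_mul_of_dvd_right (by norm_num) _) (dvd_mul_of_dvd_left ih _)
  | pred k ih =>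
    rw [zpow_sub_one, Units.val_mul, hε₂', im_mul]
    exact dvd_add (dvd_mul_of_dvd_right (by norm_num) _) (dvd_mul_of_dvd_left ih _)

lemma H_piSingle (i : Fin 8) (w : ℤ√2) :
    H (Pi.single i w) = (ε : ℤ√2) ^ (i % 4 : ℕ) * β ^ (i / 4 : ℕ) * (2 * w - star w) ^ 2 := by
  fin_cases i <;> simp [H, ε, β]

theorem exists_H_eq_zpow_mul_pow (m : ℤ) {s : ℕ} (hs : s < 2) :
    ∃ z : Fin 8 → ℤ√2, H z = ↑(ε ^ m) * β ^ s := by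
  set w : ℤ√2 := ↑((ε ^ 2) ^ (m / 4))
  obtain ⟨y, hy⟩ := three_dvd_im_zpow_ε_sq (m / 4)
  have hw : 2 * (⟨w.re, y⟩ : ℤ√2) - star ⟨w.re, y⟩ = w := by
    rw [two_mul_sub_star_mk, ← hy]
  let i : Fin 8 := ⟨(m % 4).toNat + 4 * s, by omega⟩
  refine ⟨Pi.single i ⟨w.re, y⟩, ?_⟩
  have hi : (i : ℕ) = (m % 4).toNat + 4 * s := rfl
  rw [H_piSingle, hw, zpow_eq_pow_emod_four_mul_sq ε m,
    show (i : ℕ) % 4 = (m % 4).toNat by omega, show (i : ℕ) / 4 = s by omega]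
  push_cast
  ring

end Zsqrt2

/-- **Section 4.** The generalized form `H` represents every indecomposable element of
`ℤ[√2]⁺`: for every totally positive `α ∈ ℤ[√2]` that is not a sum of two totally positive
elements of `ℤ[√2]`, there are `z₁,…,z₈ ∈ ℤ[√2]` with `H(z₁,…,z₈) = α`. -/
theorem H_represents_indecomposables (α : ℤ√2) (hα : Zsqrt2.TotPos α)
    (hind : ¬∃ β γ : ℤ√2, Zsqrt2.TotPos β ∧ Zsqrt2.TotPos γ ∧ β + γ = α) :
    ∃ z : Fin 8 → ℤ√2, Zsqrt2.H z = α := by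
  obtain ⟨m, s, hs, rfl⟩ := Zsqrt2.IsIndecomposable.exists_eq_zpow_mul_pow ⟨hα, hind⟩
  exact Zsqrt2.exists_H_eq_zpow_mul_pow m hs
end

section
/- In ℤ[√2], set ε = 3 + 2√2, β = 2 + √2, g(z) = (2z − τ(z))², S(x₁,x₂,x₃,x₄) = x₁² + x₂² + x₃² + x₄², and H(z₁,…,z₈) = g(z₁) + ε·g(z₂) + ε²·g(z₃) + ε³·g(z₄) + β·g(z₅) + εβ·g(z₆) + ε²β·g(z₇) + ε³β·g(z₈). Then the generalized quadratic form G := S + H is universal over ℚ(√2): for every totally positive α ∈ ℤ[√2] there exist x₁,…,x₄, z₁,…,z₈ ∈ ℤ[√2] with S(x₁,x₂,x₃,x₄) + H(z₁,…,z₈) = α. -/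
/-!
The values of `S + H` are stable under multiplication by the unit `ε`: multiply each `xᵢ` by
`1 + √2` and shift the `zₖ` one slot up, the factor `ε⁴` that wraps around being absorbed into
`g`, since `z ↦ 2z − τz` maps onto `ℤ + 3√2ℤ`, which `ε² = 17 + 12√2` preserves. They are
stable under `τ` for the same reason. If `α = a + b√2` is totally positive and `a < 2|b|`, then
`ε^{∓1} α` has smaller rational part, so we may assume `0 ≤ 2b ≤ a`. There,
`b = p² + 2q² + 2r² + 4s²` (a consequence of Lagrange's four-square theorem) is the
`√2`-part of `βp² + εq² + 2βr² + 2εs²`, which `H` takes, and whose rational part is at most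
`2b ≤ a`; the remaining rational integer is a sum of four squares, taken by `S`.
-/

theorem Int.exists_sq_add_two_mul_sq_add_two_mul_sq (a b c : ℤ) :
    ∃ x y z : ℤ, x ^ 2 + 2 * y ^ 2 + 2 * z ^ 2 = a ^ 2 + b ^ 2 + c ^ 2 := by
  have of_even_add : ∀ {u v : ℤ}, Even (u + v) → ∃ y z : ℤ, 2 * y ^ 2 + 2 * z ^ 2 = u ^ 2 + v ^ 2 := by
    rintro u v ⟨k, hk⟩
    exact ⟨k, k - v, by rw [show u = k + k - v by omega]; ring⟩
  have hpair : Even (b + c) ∨ Even (a + c) ∨ Even (a + b) := by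
    simp only [Int.even_add]; tauto
  rcases hpair with h | h | h
  · obtain ⟨y, z, h⟩ := of_even_add h; exact ⟨a, y, z, by linear_combination h⟩
  · obtain ⟨y, z, h⟩ := of_even_add h; exact ⟨b, y, z, by linear_combination h⟩
  · obtain ⟨y, z, h⟩ := of_even_add h; exact ⟨c, y, z, by linear_combination h⟩

theorem Nat.sum_four_squares_even_last (n : ℕ) :
    ∃ a b c d : ℤ, a ^ 2 + b ^ 2 + c ^ 2 + (2 * d) ^ 2 = n := by
  induction n using Nat.strong_induction_on with
  | _ n ih =>
  obtain ⟨a, b, c, d, h⟩ := Nat.sum_four_squares n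
  have h' : (a : ℤ) ^ 2 + (b : ℤ) ^ 2 + (c : ℤ) ^ 2 + (d : ℤ) ^ 2 = n := by exact_mod_cast h
  rcases Nat.even_or_odd d with ⟨k, rfl⟩ | hd
  · exact ⟨a, b, c, k, by rw [← h']; push_cast; ring⟩
  rcases Nat.even_or_odd c with ⟨k, rfl⟩ | hc
  · exact ⟨a, b, d, k, by rw [← h']; push_cast; ring⟩
  rcases Nat.even_or_odd b with ⟨k, rfl⟩ | hb
  · exact ⟨a, c, d, k, by rw [← h']; push_cast; ring⟩
  rcases Nat.even_or_odd a with ⟨k, rfl⟩ | ha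
  · exact ⟨b, c, d, k, by rw [← h']; push_cast; ring⟩
  obtain ⟨a, rfl⟩ := ha; obtain ⟨b, rfl⟩ := hb; obtain ⟨c, rfl⟩ := hc; obtain ⟨d, rfl⟩ := hd
  set m := a * (a + 1) + b * (b + 1) + c * (c + 1) + d * (d + 1) + 1
  have hn : n = 4 * m := by rw [← h]; ring
  obtain ⟨x, y, z, w, hm⟩ := ih m (by omega)
  exact ⟨2 * x, 2 * y, 2 * z, 2 * w, by rw [hn]; push_cast; linear_combination 4 * hm⟩

theorem Nat.exists_sq_add_two_mul_sq_add_two_mul_sq_add_four_mul_sq (n : ℕ) :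
    ∃ a b c d : ℤ, a ^ 2 + 2 * b ^ 2 + 2 * c ^ 2 + 4 * d ^ 2 = n := by
  obtain ⟨a, b, c, d, h⟩ := n.sum_four_squares_even_last
  obtain ⟨x, y, z, h'⟩ := Int.exists_sq_add_two_mul_sq_add_two_mul_sq a b c
  exact ⟨x, y, z, d, by linear_combination h' + h⟩

namespace Zsqrt2

local notation "ε" => (⟨3, 2⟩ : ℤ√2)
local notation "β" => (⟨2, 1⟩ : ℤ√2)

def g (z : ℤ√2) : ℤ√2 := (2 * z - star z) ^ 2

theorem H_eq (z : Fin 8 → ℤ√2) :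
    H z = g (z 0) + ε * g (z 1) + ε ^ 2 * g (z 2) + ε ^ 3 * g (z 3) + β * g (z 4)
      + ε * β * g (z 5) + ε ^ 2 * β * g (z 6) + ε ^ 3 * β * g (z 7) := rfl

theorem g_star (z : ℤ√2) : g (star z) = star (g z) := by
  simp [g]

/-- The `ζ` with `2ζ − τζ = ε² (2z − τz)`. -/
def epsSqLift (z : ℤ√2) : ℤ√2 := ⟨17 * z.re + 72 * z.im, 4 * z.re + 17 * z.im⟩

theorem g_epsSqLift (z : ℤ√2) : g (epsSqLift z) = ε ^ 4 * g z := by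
  have : 2 * epsSqLift z - star (epsSqLift z) = ε ^ 2 * (2 * z - star z) := by
    simp only [Zsqrtd.ext_iff, epsSqLift, pow_two, Zsqrtd.re_ofNat, Zsqrtd.im_ofNat, Zsqrtd.re_sub,
      Zsqrtd.im_sub, Zsqrtd.re_mul, Zsqrtd.im_mul, Zsqrtd.re_star, Zsqrtd.im_star]
    constructor <;> ring
  rw [g, this, g]; ring

def IsValue (γ : ℤ√2) : Prop :=
  ∃ (x : Fin 4 → ℤ√2) (z : Fin 8 → ℤ√2), ∑ i, x i ^ 2 + H z = γ

theorem IsValue.eps_mul {γ : ℤ√2} (h : IsValue γ) : IsValue (ε * γ) := by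
  obtain ⟨x, z, rfl⟩ := h
  refine ⟨fun i => ⟨1, 1⟩ * x i,
    ![epsSqLift (z 3), z 0, z 1, z 2, epsSqLift (z 7), z 4, z 5, z 6], ?_⟩
  have hsq : (⟨1, 1⟩ : ℤ√2) ^ 2 = ε := by decide
  simp only [H_eq, mul_pow, ← Finset.mul_sum, hsq]
  simp only [Matrix.cons_val, g_epsSqLift]
  ring

theorem IsValue.conj {γ : ℤ√2} (h : IsValue γ) : IsValue (star γ) := by
  obtain ⟨x, z, rfl⟩ := h
  refine ⟨fun i => star (x i),
    ![star (z 0), star (epsSqLift (z 3)), star (epsSqLift (z 2)), star (epsSqLift (z 1)),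
      star (epsSqLift (z 7)), star (epsSqLift (z 6)), star (epsSqLift (z 5)),
      star (epsSqLift (z 4))], ?_⟩
  simp only [H_eq, star_add, star_mul, star_pow, star_sum, Matrix.cons_val, g_star, g_epsSqLift]
  simp only [Zsqrtd.ext_iff, pow_succ, pow_zero, one_mul, Zsqrtd.star_mk, Zsqrtd.re_add,
    Zsqrtd.im_add, Zsqrtd.re_mul, Zsqrtd.im_mul, Zsqrtd.re_star, Zsqrtd.im_star]
  constructor <;> ring

theorem isValue_of_two_mul_im_le_re {γ : ℤ√2} (him : 0 ≤ γ.im) (hre : 2 * γ.im ≤ γ.re) :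
    IsValue γ := by
  obtain ⟨p, q, r, s, him_eq⟩ :=
    Nat.exists_sq_add_two_mul_sq_add_two_mul_sq_add_four_mul_sq γ.im.toNat
  rw [Int.toNat_of_nonneg him] at him_eq
  obtain ⟨x₀, x₁, x₂, x₃, hre_eq⟩ :=
    Nat.sum_four_squares (γ.re - (2 * p ^ 2 + 3 * q ^ 2 + 4 * r ^ 2 + 6 * s ^ 2)).toNat
  rw [← Int.natCast_inj, Int.toNat_of_nonneg (by nlinarith)] at hre_eq
  push_cast at hre_eq
  -- `(-4 + 3√2)² = 2ε⁻²`, so the slots `4, 1, 6, 3` contribute `βp², εq², 2βr², 2εs²`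
  refine ⟨![x₀, x₁, x₂, x₃], ![0, q, 0, ⟨-4 * s, s⟩, p, 0, ⟨-4 * r, r⟩, 0], ?_⟩
  simp only [Zsqrtd.ext_iff, H_eq, g, Fin.sum_univ_four, Matrix.cons_val, pow_succ, pow_zero,
    one_mul, star_zero, star_intCast, Zsqrtd.star_mk, Zsqrtd.re_intCast, Zsqrtd.im_intCast,
    Zsqrtd.re_natCast, Zsqrtd.im_natCast, Zsqrtd.re_ofNat, Zsqrtd.im_ofNat, Zsqrtd.re_zero,
    Zsqrtd.im_zero, Zsqrtd.re_add, Zsqrtd.im_add, Zsqrtd.re_sub, Zsqrtd.im_sub, Zsqrtd.re_mul,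
    Zsqrtd.im_mul]
  exact ⟨by linear_combination hre_eq, by linear_combination him_eq⟩

theorem TotPos.re_pos {α : ℤ√2} (h : TotPos α) : 0 < α.re := by
  obtain ⟨h₁, h₂⟩ := h
  exact_mod_cast (by linarith : (0 : ℝ) < α.re)

theorem TotPos.norm_pos {α : ℤ√2} (h : TotPos α) : 0 < α.norm := by
  obtain ⟨h₁, h₂⟩ := h
  have := mul_pos h₁ h₂
  have hsqrt : Real.sqrt 2 ^ 2 = 2 := Real.sq_sqrt (by norm_num)
  rw [Zsqrtd.norm_def]
  exact_mod_cast (by nlinarith : (0 : ℝ) < α.re * α.re - 2 * α.im * α.im)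

theorem isValue_of_re_pos_of_norm_pos {γ : ℤ√2} (hre : 0 < γ.re) (hnorm : 0 < γ.norm) :
    IsValue γ := by
  induction hN : γ.re.toNat using Nat.strong_induction_on generalizing γ with
  | _ N ih =>
  wlog him : 0 ≤ γ.im generalizing γ
  · simpa using (this (γ := star γ) (by simpa) (by simpa [Zsqrtd.norm_conj]) (by simpa)
      (by rw [Zsqrtd.im_star]; omega)).conj
  rcases le_or_gt (2 * γ.im) γ.re with hcone | hout
  · exact isValue_of_two_mul_im_le_re him hcone
  · have hunit : ε * star ε = 1 := by decide
    have hre_eq : (star ε * γ).re = 3 * γ.re - 4 * γ.im := by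
      rw [Zsqrtd.re_mul, Zsqrtd.re_star, Zsqrtd.im_star]; ring
    have hre' : 0 < (star ε * γ).re := by
      rw [Zsqrtd.norm_def] at hnorm; nlinarith
    have hnorm' : 0 < (star ε * γ).norm := by
      rwa [Zsqrtd.norm_mul, Zsqrtd.norm_conj, show Zsqrtd.norm ε = 1 by decide, one_mul]
    have h := (ih _ (by omega) hre' hnorm' rfl).eps_mul
    rwa [← mul_assoc, hunit, one_mul] at h

end Zsqrt2

/-- **Section 4, main claim of the counterexample.** With
`S(x₁,x₂,x₃,x₄) = x₁² + x₂² + x₃² + x₄²`, the generalized quadratic form `G := S + H` is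
universal over `ℚ(√2)`: every totally positive `α ∈ ℤ[√2]` can be written as
`S(x₁,…,x₄) + H(z₁,…,z₈) = α` with `x₁,…,x₄, z₁,…,z₈ ∈ ℤ[√2]`. -/
theorem S_plus_H_universal (α : ℤ√2) (hα : Zsqrt2.TotPos α) :
    ∃ (x : Fin 4 → ℤ√2) (z : Fin 8 → ℤ√2),
      (∑ i : Fin 4, (x i) ^ 2) + Zsqrt2.H z = α :=
  Zsqrt2.isValue_of_re_pos_of_norm_pos hα.re_pos hα.norm_pos
end
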